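/- Let X be a separable complex Banach space and T a continuous linear operator on X. The following are equivalent: (1) T is syndetically transitive; (2) for every separable complex Banach space Y and every weakly mixing continuous linear operator S on Y, the operator T ⊕ S is weakly mixing on X × Y; (3) for every separable complex Banach space Y and every weakly mixing continuous linear operator S on Y, the operator T ⊕ S is hypercyclic on X × Y. -/

import Mathlib

/-- A set `A ⊆ ℕ` is syndetic if it has bounded gaps. -/
def Syndetic (A : Set ℕ) : Prop :=
  ∃ b : ℕ, 0 < b ∧ ∀ n : ℕ, ∃ m ∈ A, n ≤ m ∧ m < n + b

/-- The set of hitting times `N_T(U, V) = {n : T^n(U) ∩ V ≠ ∅}`. -/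
def hittingTimes {X : Type*} [NormedAddCommGroup X] [NormedSpace ℂ X]
    (T : X →L[ℂ] X) (U V : Set X) : Set ℕ :=
  {n : ℕ | ((T ^ n) '' U ∩ V).Nonempty}

/-- `T` is syndetically transitive if all return sets `N_T(U,V)` are syndetic. -/
def SyndeticallyTransitive {X : Type*} [NormedAddCommGroup X] [NormedSpace ℂ X]
    (T : X →L[ℂ] X) : Prop :=
  ∀ U V : Set X, IsOpen U → U.Nonempty → IsOpen V → V.Nonempty →
    Syndetic (hittingTimes T U V)

/-- `T` is hypercyclic if it has a dense orbit. -/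
def Hypercyclic {X : Type*} [NormedAddCommGroup X] [NormedSpace ℂ X]
    (T : X →L[ℂ] X) : Prop :=
  ∃ x : X, Dense (Set.range fun n : ℕ => (T ^ n) x)

/-- `T` is weakly mixing if `T ⊕ T` has a dense orbit on `X × X`. -/
def WeaklyMixing {X : Type*} [NormedAddCommGroup X] [NormedSpace ℂ X]
    (T : X →L[ℂ] X) : Prop :=
  ∃ x y : X, Dense (Set.range fun n : ℕ => ((T ^ n) x, (T ^ n) y))

/-!
For a syndetically transitive `T`, every return set `N_T(U, V)` is thickly syndetic: choose
`U₁ + W ⊆ U` and `W + V₁ ⊆ V` with `W` a small neighbourhood of `0`; by linearity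
`N(U₁, W) ∩ N(W, V₁) ⊆ N(U, V)`, and by continuity, for each `L`, the starts of runs of length
`L` in either factor contain a return set, which is syndetic. For a weakly mixing `S`, Furstenberg's
intersection lemma and the same decomposition make `N_S(U₁, V₁) ∩ N_S(U₂, V₂)` thick. A
syndetic set meets a thick one, so `(T ⊕ S) ⊕ (T ⊕ S)` is topologically transitive, and
Birkhoff's transitivity theorem gives a dense orbit.

Conversely, if `A = N_T(U, V)` is not syndetic, let `g n` be the time elapsed at `n` since the
last visit to `A`. It grows along the arbitrarily long gaps of `A`, which makes the backward
shift on `ℓ¹` with weights `2 ^ (g (i + 1) - g i)` weakly mixing; but for `n ∈ A` its `n`-th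
power moves the `n`-th coordinate to position `0` unchanged, so `T ⊕ S` never carries
`U × B(0, 1/2)` into `V × B(e₀, 1/2)`, contradicting its hypercyclicity.
-/

open Set Metric TopologicalSpace Filter
open scoped Pointwise Topology

universe v

def runStarts (A : Set ℕ) (L : ℕ) : Set ℕ := {n | ∀ j ≤ L, n + j ∈ A}

def Thick (A : Set ℕ) : Prop := ∀ L, (runStarts A L).Nonempty

def ThicklySyndetic (A : Set ℕ) : Prop := ∀ L, Syndetic (runStarts A L)

section Combinatorics

variable {A B : Set ℕ}

lemma runStarts_mono (h : A ⊆ B) (L : ℕ) : runStarts A L ⊆ runStarts B L :=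
  fun _ hn j hj => h (hn j hj)

lemma runStarts_inter (L : ℕ) : runStarts (A ∩ B) L = runStarts A L ∩ runStarts B L := by
  ext n
  simp only [runStarts, mem_ofPred_eq, mem_inter_iff]
  exact forall₂_and

lemma Syndetic.mono (h : A ⊆ B) (hA : Syndetic A) : Syndetic B := by
  obtain ⟨b, hb, hA⟩ := hA
  exact ⟨b, hb, fun n => (hA n).imp fun m ⟨hm, hnm⟩ => ⟨h hm, hnm⟩⟩

lemma Syndetic.exists_ge (hA : Syndetic A) (L : ℕ) : ∃ n ∈ A, L ≤ n := by
  obtain ⟨b, -, hA⟩ := hA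
  obtain ⟨m, hm, hLm, -⟩ := hA L
  exact ⟨m, hm, hLm⟩

lemma Syndetic.inter_nonempty_of_thick (hA : Syndetic A) (hB : Thick B) : (A ∩ B).Nonempty := by
  obtain ⟨b, -, hA⟩ := hA
  obtain ⟨n, hn⟩ := hB b
  obtain ⟨m, hm, hnm, hmn⟩ := hA n
  exact ⟨m, hm, by simpa [Nat.add_sub_cancel' hnm] using hn (m - n) (by omega)⟩

lemma ThicklySyndetic.mono (h : A ⊆ B) (hA : ThicklySyndetic A) : ThicklySyndetic B :=
  fun L => (hA L).mono (runStarts_mono h L)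

lemma ThicklySyndetic.syndetic (hA : ThicklySyndetic A) : Syndetic A :=
  (hA 0).mono fun n hn => by simpa using hn 0 le_rfl

lemma ThicklySyndetic.inter (hA : ThicklySyndetic A) (hB : ThicklySyndetic B) :
    ThicklySyndetic (A ∩ B) := by
  intro L
  obtain ⟨a, ha, hA⟩ := hA L
  obtain ⟨c, hc, hB⟩ := hB (L + a)
  refine ⟨c + a, by omega, fun n => ?_⟩
  -- an `A`-run start within `a` steps of a `B`-run of length `L + a` also starts a `B`-run
  obtain ⟨m, hmB, hnm, hmn⟩ := hB n
  obtain ⟨m', hm'A, hmm', hm'm⟩ := hA m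
  refine ⟨m', (runStarts_inter L).symm ▸ ⟨hm'A, fun j hj => ?_⟩, by omega, by omega⟩
  simpa [show m + (m' - m + j) = m' + j by omega] using hmB (m' - m + j) (by omega)

end Combinatorics

section GapCounter

open Classical in
/-- `gapCounter A n` is `n` minus the largest element of `A ∪ {0}` not exceeding `n`. -/
noncomputable def gapCounter (A : Set ℕ) : ℕ → ℕ
  | 0 => 0
  | n + 1 => if n + 1 ∈ A then 0 else gapCounter A n + 1

def HasPlateaus (g : ℕ → ℕ) : Prop := ∀ N K, ∃ n, N ≤ n ∧ ∀ j < N, K ≤ g (n + j)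

variable {A : Set ℕ}

lemma gapCounter_succ_le (A : Set ℕ) (n : ℕ) : gapCounter A (n + 1) ≤ gapCounter A n + 1 := by
  simp only [gapCounter]
  split_ifs <;> omega

lemma gapCounter_eq_zero_of_mem {n : ℕ} (hn : n ∈ A) : gapCounter A n = 0 := by
  cases n with
  | zero => rfl
  | succ n => simp [gapCounter, hn]

lemma le_gapCounter_add {m k : ℕ} (h : ∀ i ≤ k, m + i ∉ A) : k ≤ gapCounter A (m + k) := by
  induction k with
  | zero => exact Nat.zero_le _
  | succ k ih =>
    rw [← add_assoc, gapCounter, if_neg (by simpa [add_assoc] using h (k + 1) le_rfl)]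
    exact Nat.succ_le_succ (ih fun i hi => h i (by omega))

lemma hasPlateaus_gapCounter (hA : ¬ Syndetic A) : HasPlateaus (gapCounter A) := by
  intro N K
  simp only [Syndetic, not_exists, not_and, not_forall] at hA
  obtain ⟨m, hm⟩ := hA (2 * N + K + 1) (by omega)
  refine ⟨m + (N + K), by omega, fun j hj => ?_⟩
  have := le_gapCounter_add (A := A) (m := m) (k := N + K + j)
    fun i hi hmem => hm _ hmem (by omega) (by omega)
  rw [add_assoc]
  omega

end GapCounter

lemma exists_open_prod_subset {α β : Type*} [TopologicalSpace α] [TopologicalSpace β]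
    {G : Set (α × β)} (hG : IsOpen G) (hGne : G.Nonempty) :
    ∃ U V, IsOpen U ∧ U.Nonempty ∧ IsOpen V ∧ V.Nonempty ∧ U ×ˢ V ⊆ G := by
  obtain ⟨⟨x, y⟩, hxy⟩ := hGne
  obtain ⟨U, V, hU, hV, hx, hy, hUV⟩ := isOpen_prod_iff.1 hG x y hxy
  exact ⟨U, V, hU, ⟨x, hx⟩, hV, ⟨y, hy⟩, hUV⟩

section Dynamics

variable {E F : Type*} [NormedAddCommGroup E] [NormedSpace ℂ E]
  [NormedAddCommGroup F] [NormedSpace ℂ F]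

def IsTopologicallyTransitive (T : E →L[ℂ] E) : Prop :=
  ∀ U V : Set E, IsOpen U → U.Nonempty → IsOpen V → V.Nonempty → (hittingTimes T U V).Nonempty

variable {T : E →L[ℂ] E} {S : F →L[ℂ] F}

lemma mem_hittingTimes_iff {U V : Set E} {n : ℕ} :
    n ∈ hittingTimes T U V ↔ ∃ x ∈ U, (T ^ n) x ∈ V := by
  simp [hittingTimes, Set.Nonempty]

lemma hittingTimes_mono {U U' V V' : Set E} (hU : U ⊆ U') (hV : V ⊆ V') :
    hittingTimes T U V ⊆ hittingTimes T U' V' :=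
  fun _ hn => hn.mono (inter_subset_inter (image_mono hU) hV)

lemma prodMap_pow_apply (n : ℕ) (x : E) (y : F) :
    (T.prodMap S ^ n) (x, y) = ((T ^ n) x, (S ^ n) y) := by
  induction n with
  | zero => rfl
  | succ n ih =>
    simp only [pow_succ', mul_apply_eq_comp, ih]
    rfl

lemma hittingTimes_prodMap (U U' : Set E) (V V' : Set F) :
    hittingTimes (T.prodMap S) (U ×ˢ V) (U' ×ˢ V') =
      hittingTimes T U U' ∩ hittingTimes S V V' := by
  ext n
  simp only [mem_inter_iff, mem_hittingTimes_iff, Prod.exists, mem_prod, prodMap_pow_apply]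
  aesop

lemma isTopologicallyTransitive_prodMap_iff : IsTopologicallyTransitive (T.prodMap S) ↔
    ∀ (U U' : Set E) (V V' : Set F), IsOpen U → U.Nonempty → IsOpen U' → U'.Nonempty →
      IsOpen V → V.Nonempty → IsOpen V' → V'.Nonempty →
      (hittingTimes T U U' ∩ hittingTimes S V V').Nonempty := by
  refine ⟨fun h U U' V V' hU hUne hU' hU'ne hV hVne hV' hV'ne => ?_,
    fun h G G' hG hGne hG' hG'ne => ?_⟩
  · rw [← hittingTimes_prodMap]
    exact h _ _ (hU.prod hV) (hUne.prod hVne) (hU'.prod hV') (hU'ne.prod hV'ne)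
  · obtain ⟨U, V, hU, hUne, hV, hVne, hUV⟩ := exists_open_prod_subset hG hGne
    obtain ⟨U', V', hU', hU'ne, hV', hV'ne, hUV'⟩ := exists_open_prod_subset hG' hG'ne
    obtain ⟨n, hn⟩ := h U U' V V' hU hUne hU' hU'ne hV hVne hV' hV'ne
    exact ⟨n, hittingTimes_mono hUV hUV' (hittingTimes_prodMap U U' V V' ▸ hn)⟩

lemma weaklyMixing_iff_hypercyclic_prodMap : WeaklyMixing T ↔ Hypercyclic (T.prodMap T) := by
  simp only [WeaklyMixing, Hypercyclic, Prod.exists, prodMap_pow_apply]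

lemma WeaklyMixing.hypercyclic (hT : WeaklyMixing T) : Hypercyclic T := by
  obtain ⟨x, y, hxy⟩ := hT
  exact ⟨x, (Function.Surjective.denseRange Prod.fst_surjective).comp hxy continuous_fst⟩

lemma denseRange_pow (hT : DenseRange T) (n : ℕ) : DenseRange (T ^ n) := by
  induction n with
  | zero => exact denseRange_id
  | succ n ih =>
    rw [pow_succ', FunLike.coe_mul_eq_comp]
    exact hT.comp ih T.continuous

lemma Hypercyclic.denseRange (hT : Hypercyclic T) : DenseRange T := by
  obtain ⟨x, hx⟩ := hT
  rcases subsingleton_or_nontrivial E with hE | hE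
  · exact dense_indiscrete (range_nonempty T)
  -- every point of the orbit other than `x` itself lies in the range of `T`
  refine (hx.sdiff_singleton x).mono ?_
  rintro _ ⟨⟨n | n, rfl⟩, hn⟩
  · exact absurd rfl hn
  · exact ⟨(T ^ n) x, by simp only [pow_succ', mul_apply_eq_comp]⟩

lemma Hypercyclic.isTopologicallyTransitive (hT : Hypercyclic T) : IsTopologicallyTransitive T := by
  intro U V hU hUne hV hVne
  obtain ⟨x, hx⟩ := id hT
  obtain ⟨_, ⟨n, rfl⟩, hn⟩ := hx.exists_mem_open hU hUne
  obtain ⟨z, hz⟩ := (denseRange_pow hT.denseRange n).exists_mem_open hV hVne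
  obtain ⟨_, ⟨m, rfl⟩, hm⟩ := hx.exists_mem_open (hV.preimage (T ^ n).continuous) ⟨z, hz⟩
  refine ⟨m, mem_hittingTimes_iff.2 ⟨(T ^ n) x, hn, ?_⟩⟩
  rwa [← mul_apply_eq_comp, pow_mul_comm, mul_apply_eq_comp]

theorem IsTopologicallyTransitive.hypercyclic [CompleteSpace E] [SeparableSpace E]
    (hT : IsTopologicallyTransitive T) : Hypercyclic T := by
  obtain ⟨b, hbc, hbne, hb⟩ := exists_countable_basis E
  have : Countable b := hbc.to_subtype
  -- Baire: the points whose orbit meets every basic open set form a dense `G_δ`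
  have hdense : Dense (⋂ W : b, ⋃ n : ℕ, (T ^ n) ⁻¹' (W : Set E)) := by
    refine dense_iInter_of_isOpen
      (fun W => isOpen_iUnion fun n => (hb.isOpen W.2).preimage (T ^ n).continuous) fun W => ?_
    refine dense_iff_inter_open.2 fun O hO hOne => ?_
    have hWne : (W : Set E).Nonempty := nonempty_iff_ne_empty.2 fun h => hbne (h ▸ W.2)
    obtain ⟨n, hn⟩ := hT O W hO hOne (hb.isOpen W.2) hWne
    obtain ⟨x, hx, hxW⟩ := mem_hittingTimes_iff.1 hn
    exact ⟨x, hx, mem_iUnion.2 ⟨n, hxW⟩⟩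
  obtain ⟨x, hx⟩ := hdense.nonempty
  refine ⟨x, hb.dense_iff.2 fun W hW _ => ?_⟩
  obtain ⟨n, hn⟩ := mem_iUnion.1 (mem_iInter.1 hx ⟨W, hW⟩)
  exact ⟨_, hn, n, rfl⟩

lemma hittingTimes_inter_subset_add (U₁ W₁ W₂ V₂ : Set E) :
    hittingTimes T U₁ W₁ ∩ hittingTimes T W₂ V₂ ⊆ hittingTimes T (U₁ + W₂) (W₁ + V₂) := by
  rintro n ⟨h₁, h₂⟩
  obtain ⟨x, hx, hx'⟩ := mem_hittingTimes_iff.1 h₁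
  obtain ⟨y, hy, hy'⟩ := mem_hittingTimes_iff.1 h₂
  exact mem_hittingTimes_iff.2
    ⟨x + y, add_mem_add hx hy, map_add (T ^ n) x y ▸ add_mem_add hx' hy'⟩

lemma exists_open_add_subset {G H : Set E} (hG : IsOpen G) (hGne : G.Nonempty) (hH : IsOpen H)
    (hHne : H.Nonempty) : ∃ U W V : Set E, IsOpen U ∧ U.Nonempty ∧ IsOpen W ∧ (0 : E) ∈ W ∧
      IsOpen V ∧ V.Nonempty ∧ U + W ⊆ G ∧ W + V ⊆ H := by
  obtain ⟨u, hu⟩ := hGne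
  obtain ⟨v, hv⟩ := hHne
  obtain ⟨ε, hε, hεG⟩ := Metric.isOpen_iff.1 hG u hu
  obtain ⟨δ, hδ, hδH⟩ := Metric.isOpen_iff.1 hH v hv
  obtain ⟨r, hr, hrε, hrδ⟩ : ∃ r > 0, r + r ≤ ε ∧ r + r ≤ δ :=
    ⟨min ε δ / 2, by positivity, by linarith [min_le_left ε δ], by linarith [min_le_right ε δ]⟩
  refine ⟨ball u r, ball 0 r, ball v r, isOpen_ball, ⟨u, mem_ball_self hr⟩, isOpen_ball,
    mem_ball_self hr, isOpen_ball, ⟨v, mem_ball_self hr⟩, ?_, ?_⟩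
  · rw [ball_add_ball hr hr, add_zero]
    exact (ball_subset_ball hrε).trans hεG
  · rw [ball_add_ball hr hr, zero_add]
    exact (ball_subset_ball hrδ).trans hδH

lemma exists_open_zero_mem_forall_pow_mem {W : Set E} (hW : IsOpen W) (h0 : (0 : E) ∈ W)
    (T : E →L[ℂ] E) (L : ℕ) :
    ∃ W' : Set E, IsOpen W' ∧ (0 : E) ∈ W' ∧ ∀ z ∈ W', ∀ j ≤ L, (T ^ j) z ∈ W := by
  have : ∀ᶠ z in 𝓝 (0 : E), ∀ j ∈ Iic L, (T ^ j) z ∈ W :=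
    (finite_Iic L).eventually_all.2 fun j _ =>
      (T ^ j).continuous.continuousAt.preimage_mem_nhds (by simpa using hW.mem_nhds h0)
  obtain ⟨W', hW', hW'o, hW'0⟩ := _root_.eventually_nhds_iff.1 this
  exact ⟨W', hW'o, hW'0, fun z hz j hj => hW' z hz j hj⟩

lemma hittingTimes_subset_runStarts_target {U W W' : Set E} {L : ℕ}
    (hW' : ∀ z ∈ W', ∀ j ≤ L, (T ^ j) z ∈ W) :
    hittingTimes T U W' ⊆ runStarts (hittingTimes T U W) L := by
  intro n hn j hj
  obtain ⟨x, hx, hx'⟩ := mem_hittingTimes_iff.1 hn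
  refine mem_hittingTimes_iff.2 ⟨x, hx, ?_⟩
  rw [add_comm, pow_add, mul_apply_eq_comp]
  exact hW' _ hx' j hj

lemma hittingTimes_subset_runStarts_source {W W' V : Set E} {L : ℕ}
    (hW' : ∀ z ∈ W', ∀ j ≤ L, (T ^ j) z ∈ W) :
    hittingTimes T W' ((T ^ L) ⁻¹' V) ⊆ runStarts (hittingTimes T W V) L := by
  intro n hn j hj
  obtain ⟨z, hz, hz'⟩ := mem_hittingTimes_iff.1 hn
  refine mem_hittingTimes_iff.2 ⟨(T ^ (L - j)) z, hW' z hz _ (Nat.sub_le L j), ?_⟩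
  rw [← mul_apply_eq_comp, ← pow_add, show n + j + (L - j) = L + n by omega, pow_add,
    mul_apply_eq_comp]
  exact hz'

lemma SyndeticallyTransitive.denseRange (hT : SyndeticallyTransitive T) : DenseRange T := by
  refine dense_iff_inter_open.2 fun V hV hVne => ?_
  obtain ⟨n, hn, hn1⟩ := (hT univ V isOpen_univ univ_nonempty hV hVne).exists_ge 1
  obtain ⟨x, -, hx⟩ := mem_hittingTimes_iff.1 hn
  refine ⟨_, hx, (T ^ (n - 1)) x, ?_⟩
  rw [← mul_apply_eq_comp, ← pow_succ', Nat.sub_add_cancel hn1]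

theorem SyndeticallyTransitive.thicklySyndetic (hT : SyndeticallyTransitive T) {G H : Set E}
    (hG : IsOpen G) (hGne : G.Nonempty) (hH : IsOpen H) (hHne : H.Nonempty) :
    ThicklySyndetic (hittingTimes T G H) := by
  obtain ⟨U, W, V, hU, hUne, hW, hW0, hV, hVne, hUW, hWV⟩ :=
    exists_open_add_subset hG hGne hH hHne
  have hUW' : ThicklySyndetic (hittingTimes T U W) := fun L => by
    obtain ⟨W', hW'o, hW'0, hW'⟩ := exists_open_zero_mem_forall_pow_mem hW hW0 T L
    exact (hT U W' hU hUne hW'o ⟨0, hW'0⟩).mono (hittingTimes_subset_runStarts_target hW')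
  have hWV' : ThicklySyndetic (hittingTimes T W V) := fun L => by
    obtain ⟨W', hW'o, hW'0, hW'⟩ := exists_open_zero_mem_forall_pow_mem hW hW0 T L
    obtain ⟨z, hz⟩ := (denseRange_pow hT.denseRange L).exists_mem_open hV hVne
    exact (hT W' _ hW'o ⟨0, hW'0⟩ (hV.preimage (T ^ L).continuous) ⟨z, hz⟩).mono
      (hittingTimes_subset_runStarts_source hW')
  exact (hUW'.inter hWV').mono
    ((hittingTimes_inter_subset_add U W W V).trans (hittingTimes_mono hUW hWV))

/-- Furstenberg's intersection lemma. -/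
theorem IsTopologicallyTransitive.exists_hittingTimes_subset_inter
    (hS : IsTopologicallyTransitive (S.prodMap S))
    {U₁ V₁ U₂ V₂ : Set F} (hU₁ : IsOpen U₁) (hU₁ne : U₁.Nonempty) (hV₁ : IsOpen V₁)
    (hV₁ne : V₁.Nonempty) (hU₂ : IsOpen U₂) (hU₂ne : U₂.Nonempty) (hV₂ : IsOpen V₂)
    (hV₂ne : V₂.Nonempty) : ∃ U V : Set F, IsOpen U ∧ U.Nonempty ∧ IsOpen V ∧ V.Nonempty ∧
      hittingTimes S U V ⊆ hittingTimes S U₁ V₁ ∩ hittingTimes S U₂ V₂ := by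
  obtain ⟨n, hnU, hnV⟩ := isTopologicallyTransitive_prodMap_iff.1 hS U₁ U₂ V₁ V₂
    hU₁ hU₁ne hU₂ hU₂ne hV₁ hV₁ne hV₂ hV₂ne
  obtain ⟨x, hx, hx'⟩ := mem_hittingTimes_iff.1 hnU
  obtain ⟨y, hy, hy'⟩ := mem_hittingTimes_iff.1 hnV
  refine ⟨U₁ ∩ (S ^ n) ⁻¹' U₂, V₁ ∩ (S ^ n) ⁻¹' V₂, hU₁.inter (hU₂.preimage (S ^ n).continuous),
    ⟨x, hx, hx'⟩, hV₁.inter (hV₂.preimage (S ^ n).continuous), ⟨y, hy, hy'⟩, fun m hm => ?_⟩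
  obtain ⟨z, ⟨hz₁, hz₂⟩, hz₁', hz₂'⟩ := mem_hittingTimes_iff.1 hm
  refine ⟨mem_hittingTimes_iff.2 ⟨z, hz₁, hz₁'⟩, mem_hittingTimes_iff.2 ⟨(S ^ n) z, hz₂, ?_⟩⟩
  rwa [← mul_apply_eq_comp, pow_mul_comm, mul_apply_eq_comp]

theorem IsTopologicallyTransitive.thick_hittingTimes (hS : IsTopologicallyTransitive (S.prodMap S))
    (hS' : DenseRange S) {G H : Set F} (hG : IsOpen G) (hGne : G.Nonempty) (hH : IsOpen H)
    (hHne : H.Nonempty) : Thick (hittingTimes S G H) := by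
  obtain ⟨U, W, V, hU, hUne, hW, hW0, hV, hVne, hUW, hWV⟩ :=
    exists_open_add_subset hG hGne hH hHne
  intro L
  obtain ⟨W', hW'o, hW'0, hW'⟩ := exists_open_zero_mem_forall_pow_mem hW hW0 S L
  obtain ⟨z, hz⟩ := (denseRange_pow hS' L).exists_mem_open hV hVne
  obtain ⟨n, hn₁, hn₂⟩ := isTopologicallyTransitive_prodMap_iff.1 hS U W' W' ((S ^ L) ⁻¹' V)
    hU hUne hW'o ⟨0, hW'0⟩ hW'o ⟨0, hW'0⟩ (hV.preimage (S ^ L).continuous) ⟨z, hz⟩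
  refine ⟨n, runStarts_mono
    ((hittingTimes_inter_subset_add U W W V).trans (hittingTimes_mono hUW hWV)) L ?_⟩
  rw [runStarts_inter]
  exact ⟨hittingTimes_subset_runStarts_target hW' hn₁,
    hittingTimes_subset_runStarts_source hW' hn₂⟩

theorem WeaklyMixing.thick_hittingTimes_inter (hS : WeaklyMixing S) {U₁ V₁ U₂ V₂ : Set F}
    (hU₁ : IsOpen U₁) (hU₁ne : U₁.Nonempty) (hV₁ : IsOpen V₁) (hV₁ne : V₁.Nonempty)
    (hU₂ : IsOpen U₂) (hU₂ne : U₂.Nonempty) (hV₂ : IsOpen V₂) (hV₂ne : V₂.Nonempty) :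
    Thick (hittingTimes S U₁ V₁ ∩ hittingTimes S U₂ V₂) := by
  have hSS := (weaklyMixing_iff_hypercyclic_prodMap.1 hS).isTopologicallyTransitive
  obtain ⟨U, V, hU, hUne, hV, hVne, hUV⟩ :=
    hSS.exists_hittingTimes_subset_inter hU₁ hU₁ne hV₁ hV₁ne hU₂ hU₂ne hV₂ hV₂ne
  exact fun L => (hSS.thick_hittingTimes hS.hypercyclic.denseRange hU hUne hV hVne L).mono
    (runStarts_mono hUV L)

theorem SyndeticallyTransitive.weaklyMixing_prodMap [CompleteSpace E] [SeparableSpace E]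
    [CompleteSpace F] [SeparableSpace F] (hT : SyndeticallyTransitive T) (hS : WeaklyMixing S) :
    WeaklyMixing (T.prodMap S) := by
  refine weaklyMixing_iff_hypercyclic_prodMap.2 (IsTopologicallyTransitive.hypercyclic ?_)
  refine isTopologicallyTransitive_prodMap_iff.2
    fun G G' H H' hG hGne hG' hG'ne hH hHne hH' hH'ne => ?_
  obtain ⟨U₁, V₁, hU₁, hU₁ne, hV₁, hV₁ne, hG₁⟩ := exists_open_prod_subset hG hGne
  obtain ⟨U₁', V₁', hU₁', hU₁'ne, hV₁', hV₁'ne, hG₁'⟩ := exists_open_prod_subset hG' hG'ne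
  obtain ⟨U₂, V₂, hU₂, hU₂ne, hV₂, hV₂ne, hH₂⟩ := exists_open_prod_subset hH hHne
  obtain ⟨U₂', V₂', hU₂', hU₂'ne, hV₂', hV₂'ne, hH₂'⟩ := exists_open_prod_subset hH' hH'ne
  obtain ⟨n, hnT, hnS⟩ := ((hT.thicklySyndetic hU₁ hU₁ne hU₁' hU₁'ne).inter
      (hT.thicklySyndetic hU₂ hU₂ne hU₂' hU₂'ne)).syndetic.inter_nonempty_of_thick
    (hS.thick_hittingTimes_inter hV₁ hV₁ne hV₁' hV₁'ne hV₂ hV₂ne hV₂' hV₂'ne)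
  refine ⟨n, hittingTimes_mono hG₁ hG₁' ?_, hittingTimes_mono hH₂ hH₂' ?_⟩ <;>
    rw [hittingTimes_prodMap]
  exacts [⟨hnT.1, hnS.1⟩, ⟨hnT.2, hnS.2⟩]

end Dynamics

section Conjugation

variable {E F : Type*} [NormedAddCommGroup E] [NormedSpace ℂ E]
  [NormedAddCommGroup F] [NormedSpace ℂ F] (e : E ≃L[ℂ] F) {S : E →L[ℂ] E}

lemma conjContinuousAlgEquiv_pow_apply (n : ℕ) (y : F) :
    (e.conjContinuousAlgEquiv S ^ n) y = e ((S ^ n) (e.symm y)) := by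
  rw [← map_pow]
  rfl

lemma hittingTimes_conjContinuousAlgEquiv (U V : Set E) :
    hittingTimes (e.conjContinuousAlgEquiv S) (e.symm ⁻¹' U) (e.symm ⁻¹' V) =
      hittingTimes S U V := by
  ext n
  simp only [mem_hittingTimes_iff, mem_preimage, conjContinuousAlgEquiv_pow_apply,
    ContinuousLinearEquiv.symm_apply_apply]
  exact ⟨fun ⟨y, hy, hy'⟩ => ⟨e.symm y, hy, hy'⟩,
    fun ⟨x, hx, hx'⟩ => ⟨e x, by simpa using hx, by simpa using hx'⟩⟩

lemma WeaklyMixing.conjContinuousAlgEquiv (hS : WeaklyMixing S) :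
    WeaklyMixing (e.conjContinuousAlgEquiv S) := by
  obtain ⟨x, y, hxy⟩ := hS
  refine ⟨e x, e y, ?_⟩
  have : (fun n : ℕ => ((e.conjContinuousAlgEquiv S ^ n) (e x),
      (e.conjContinuousAlgEquiv S ^ n) (e y))) =
      Prod.map e e ∘ fun n => ((S ^ n) x, (S ^ n) y) := by
    funext n
    simp only [Function.comp_apply, Prod.map_apply, conjContinuousAlgEquiv_pow_apply,
      ContinuousLinearEquiv.symm_apply_apply]
  rw [this]
  exact (Prod.map_surjective.2 ⟨e.surjective, e.surjective⟩).denseRange.comp hxy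
    (e.continuous.prodMap e.continuous)

end Conjugation

instance {α : Type*} [TopologicalSpace α] [SeparableSpace α] : SeparableSpace (ULift α) :=
  Homeomorph.ulift.symm.surjective.denseRange.separableSpace Homeomorph.ulift.symm.continuous

lemma lp.norm_eq_tsum_norm {α : Type*} {E : α → Type*} [∀ i, NormedAddCommGroup (E i)]
    (f : lp E 1) : ‖f‖ = ∑' i, ‖f i‖ := by
  simpa using lp.norm_eq_tsum_rpow (by norm_num) f

lemma memℓp_one_iff {α : Type*} {E : α → Type*} [∀ i, NormedAddCommGroup (E i)]
    {f : ∀ i, E i} : Memℓp f 1 ↔ Summable fun i => ‖f i‖ := by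
  rw [memℓp_gen_iff (by norm_num)]
  simp

section WeightedShift

local notation "ℓ¹" => lp (fun _ : ℕ => ℂ) 1

instance : SeparableSpace ℓ¹ := by
  set D := ⋃ N : ℕ, range fun c : ℕ → ℂ => ∑ i ∈ Finset.range N, lp.single 1 i (c i)
  have hsep : IsSeparable D :=
    .iUnion fun N => isSeparable_range <| continuous_finsetSum _ fun i _ =>
      (lp.singleContinuousLinearMap ℂ (fun _ : ℕ => ℂ) 1 i).continuous.comp (continuous_apply i)
  have hdense : Dense D := fun f =>
    mem_closure_of_tendsto (lp.hasSum_single ENNReal.one_ne_top f).tendsto_sum_nat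
      (.of_forall fun N => mem_iUnion.2 ⟨N, f, rfl⟩)
  exact isSeparable_univ_iff.1 (by simpa [hdense.closure_eq] using hsep.closure)

variable {g : ℕ → ℕ}

lemma norm_two_pow_div_two_pow_le (hg : ∀ n, g (n + 1) ≤ g n + 1) (i : ℕ) :
    ‖(2 : ℂ) ^ g (i + 1) / 2 ^ g i‖ ≤ 2 := by
  rw [norm_div, norm_pow, norm_pow, RCLike.norm_two, div_le_iff₀ (by positivity), ← pow_succ']
  exact pow_le_pow_right₀ one_le_two (hg i)

variable (g) in
noncomputable def weightedShift (hg : ∀ n, g (n + 1) ≤ g n + 1) : ℓ¹ →L[ℂ] ℓ¹ :=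
  have hle (f : ℓ¹) (i : ℕ) : ‖(2 : ℂ) ^ g (i + 1) / 2 ^ g i * f (i + 1)‖ ≤ 2 * ‖f (i + 1)‖ := by
    rw [norm_mul]
    exact mul_le_mul_of_nonneg_right (norm_two_pow_div_two_pow_le hg i) (norm_nonneg _)
  have hsum (f : ℓ¹) : Summable fun i => ‖f (i + 1)‖ :=
    (memℓp_one_iff.1 f.2).comp_injective (add_left_injective 1)
  LinearMap.mkContinuous
    { toFun f := ⟨fun i => (2 : ℂ) ^ g (i + 1) / 2 ^ g i * f (i + 1),
        memℓp_one_iff.2 <| .of_nonneg_of_le (fun _ => norm_nonneg _) (hle f) ((hsum f).mul_left 2)⟩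
      map_add' f f' := lp.ext <| funext fun i => by simp [mul_add]; rfl
      map_smul' c f := lp.ext <| funext fun i => by simp; ring } 2
    fun f => by
      have hf := memℓp_one_iff.1 f.2
      rw [lp.norm_eq_tsum_norm, lp.norm_eq_tsum_norm, ← tsum_mul_left]
      calc _ ≤ ∑' i, 2 * ‖f (i + 1)‖ :=
            Summable.tsum_le_tsum (hle f) (.of_nonneg_of_le (fun _ => norm_nonneg _) (hle f)
              ((hsum f).mul_left 2)) ((hsum f).mul_left 2)
        _ ≤ ∑' i, 2 * ‖f i‖ := by
          rw [(hf.mul_left 2).tsum_eq_zero_add]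
          linarith [norm_nonneg (f 0)]

variable (hg : ∀ n, g (n + 1) ≤ g n + 1)

lemma weightedShift_apply (f : ℓ¹) (i : ℕ) :
    weightedShift g hg f i = 2 ^ g (i + 1) / 2 ^ g i * f (i + 1) := rfl

lemma weightedShift_pow_apply (n : ℕ) (f : ℓ¹) (i : ℕ) :
    (weightedShift g hg ^ n) f i = 2 ^ g (n + i) / 2 ^ g i * f (n + i) := by
  induction n generalizing f with
  | zero => simp
  | succ n ih =>
    rw [pow_succ, mul_apply_eq_comp, ih, weightedShift_apply, show n + 1 + i = n + i + 1 by omega]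
    field_simp

lemma weightedShift_pow_single_of_lt {n i : ℕ} (hi : i < n) (a : ℂ) :
    (weightedShift g hg ^ n) (lp.single 1 i a) = 0 := by
  ext k
  rw [weightedShift_pow_apply, lp.single_apply_ne _ _ _ (by omega)]
  simp

lemma weightedShift_pow_single_add (n i : ℕ) (a : ℂ) :
    (weightedShift g hg ^ n) (lp.single 1 (n + i) a) =
      lp.single 1 i (2 ^ g (n + i) / 2 ^ g i * a) := by
  ext k
  rw [weightedShift_pow_apply, lp.single_apply, lp.single_apply]
  by_cases h : k = i <;> simp [h]

lemma exists_forall_mem_hittingTimes_weightedShift {U V : Set ℓ¹} (hU : IsOpen U)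
    (hUne : U.Nonempty) (hV : IsOpen V) (hVne : V.Nonempty) : ∃ N K : ℕ, ∀ n, N ≤ n →
      (∀ j < N, K ≤ g (n + j)) → n ∈ hittingTimes (weightedShift g hg) U V := by
  obtain ⟨u, hu⟩ := hUne
  obtain ⟨v, hv⟩ := hVne
  obtain ⟨ε, hε, hεU⟩ := Metric.isOpen_iff.1 hU u hu
  obtain ⟨δ, hδ, hδV⟩ := Metric.isOpen_iff.1 hV v hv
  have htrunc (f : ℓ¹) {r : ℝ} (hr : 0 < r) :
      ∃ N, ∀ M ≥ N, dist (∑ i ∈ Finset.range M, lp.single 1 i (f i)) f < r :=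
    Metric.tendsto_atTop.1 (lp.hasSum_single ENNReal.one_ne_top f).tendsto_sum_nat r hr
  obtain ⟨N₁, hN₁⟩ := htrunc u (half_pos hε)
  obtain ⟨N₂, hN₂⟩ := htrunc v hδ
  set N := max N₁ N₂
  set C := ∑ i ∈ Finset.range N, (2 : ℝ) ^ g i * ‖v i‖
  obtain ⟨K, hK⟩ := pow_unbounded_of_one_lt (C / (ε / 2)) one_lt_two
  refine ⟨N, K, fun n hNn hK' => mem_hittingTimes_iff.2 ?_⟩
  -- `S ^ n` kills the truncation of `u` and maps `y` onto that of `v`; the plateau makes `y` small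
  set y : ℓ¹ :=
    ∑ i ∈ Finset.range N, lp.single 1 (n + i) ((2 : ℂ) ^ g i / 2 ^ g (n + i) * v i)
  have hy : ‖y‖ < ε / 2 := by
    calc ‖y‖ ≤ ∑ i ∈ Finset.range N, ‖(2 : ℂ) ^ g i / 2 ^ g (n + i) * v i‖ := by
          refine (norm_sum_le _ _).trans_eq (Finset.sum_congr rfl fun i _ => ?_)
          exact lp.norm_single (by norm_num) _ _
      _ ≤ ∑ i ∈ Finset.range N, (2 : ℝ) ^ g i * ‖v i‖ / 2 ^ K := by
          refine Finset.sum_le_sum fun i hi => ?_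
          rw [norm_mul, norm_div, norm_pow, norm_pow, RCLike.norm_two, div_mul_eq_mul_div]
          refine div_le_div_of_nonneg_left (by positivity) (by positivity) ?_
          exact pow_le_pow_right₀ one_le_two (hK' i (Finset.mem_range.1 hi))
      _ = C / 2 ^ K := (Finset.sum_div ..).symm
      _ < ε / 2 := by rwa [div_lt_iff₀ (by positivity), mul_comm, ← div_lt_iff₀ (by positivity)]
  refine ⟨(∑ i ∈ Finset.range N, lp.single 1 i (u i)) + y, hεU ?_, hδV ?_⟩
  · rw [mem_ball, dist_eq_norm, add_sub_right_comm]
    calc _ ≤ _ := norm_add_le _ _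
      _ < ε / 2 + ε / 2 := add_lt_add (by simpa [dist_eq_norm] using hN₁ N (le_max_left ..)) hy
      _ = ε := add_halves ε
  · have hSy : (weightedShift g hg ^ n) y = ∑ i ∈ Finset.range N, lp.single 1 i (v i) := by
      simp only [y, map_sum, weightedShift_pow_single_add]
      refine Finset.sum_congr rfl fun i _ => ?_
      rw [← mul_assoc, div_mul_div_cancel₀ (pow_ne_zero _ two_ne_zero),
        div_self (pow_ne_zero _ two_ne_zero), one_mul]
    rw [map_add, map_sum, hSy, Finset.sum_eq_zero fun i hi =>
      weightedShift_pow_single_of_lt hg (by simp at hi; omega) _, zero_add, mem_ball]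
    exact hN₂ N (le_max_right ..)

lemma weaklyMixing_weightedShift (hpl : HasPlateaus g) : WeaklyMixing (weightedShift g hg) := by
  refine weaklyMixing_iff_hypercyclic_prodMap.2 (IsTopologicallyTransitive.hypercyclic ?_)
  refine isTopologicallyTransitive_prodMap_iff.2
    fun U U' V V' hU hUne hU' hU'ne hV hVne hV' hV'ne => ?_
  obtain ⟨N₁, K₁, h₁⟩ := exists_forall_mem_hittingTimes_weightedShift hg hU hUne hU' hU'ne
  obtain ⟨N₂, K₂, h₂⟩ := exists_forall_mem_hittingTimes_weightedShift hg hV hVne hV' hV'ne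
  obtain ⟨n, hn, hK⟩ := hpl (max N₁ N₂) (max K₁ K₂)
  exact ⟨n, h₁ n (le_of_max_le_left hn) fun j hj => (le_max_left ..).trans (hK j (by omega)),
    h₂ n (le_of_max_le_right hn) fun j hj => (le_max_right ..).trans (hK j (by omega))⟩

lemma hittingTimes_weightedShift_subset :
    hittingTimes (weightedShift g hg) (ball 0 (1 / 2)) (ball (lp.single 1 0 1) (1 / 2)) ⊆
      {n | g n ≠ g 0} := by
  intro n hn hgn
  obtain ⟨y, hy, hy'⟩ := mem_hittingTimes_iff.1 hn
  rw [mem_ball_zero_iff] at hy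
  rw [mem_ball, dist_eq_norm] at hy'
  have h₁ : ‖y n‖ < 1 / 2 := (lp.norm_apply_le_norm one_ne_zero y n).trans_lt hy
  have h₂ : ‖y n - 1‖ < 1 / 2 := by
    have := (lp.norm_apply_le_norm one_ne_zero _ 0).trans_lt hy'
    rwa [lp.coeFn_sub, Pi.sub_apply, weightedShift_pow_apply, add_zero, hgn,
      div_self (pow_ne_zero _ two_ne_zero), one_mul, lp.single_apply_self] at this
  have := norm_sub_le (y n) (y n - 1)
  rw [sub_sub_cancel, norm_one] at this
  linarith

end WeightedShift

theorem syndeticallyTransitive_of_forall_hypercyclic_prodMap {X : Type*} [NormedAddCommGroup X]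
    [NormedSpace ℂ X] (T : X →L[ℂ] X)
    (H : ∀ (Y : Type v) [NormedAddCommGroup Y] [NormedSpace ℂ Y] [CompleteSpace Y]
      [SeparableSpace Y] (S : Y →L[ℂ] Y), WeaklyMixing S → Hypercyclic (T.prodMap S)) :
    SyndeticallyTransitive T := by
  intro U V hU hUne hV hVne
  by_contra hA
  set e : lp (fun _ : ℕ => ℂ) 1 ≃L[ℂ] ULift.{v} (lp (fun _ : ℕ => ℂ) 1) :=
    ContinuousLinearEquiv.ulift.symm
  have hS := (weaklyMixing_weightedShift (gapCounter_succ_le _)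
    (hasPlateaus_gapCounter hA)).conjContinuousAlgEquiv e
  obtain ⟨n, hnT, hnS⟩ :=
    isTopologicallyTransitive_prodMap_iff.1 (H _ _ hS).isTopologicallyTransitive U V
    (e.symm ⁻¹' ball 0 (1 / 2)) (e.symm ⁻¹' ball (lp.single 1 0 1) (1 / 2)) hU hUne hV hVne
    (isOpen_ball.preimage e.symm.continuous) ⟨e 0, by simp⟩
    (isOpen_ball.preimage e.symm.continuous) ⟨e (lp.single 1 0 1), by simp⟩
  rw [hittingTimes_conjContinuousAlgEquiv] at hnS
  exact hittingTimes_weightedShift_subset _ hnS (gapCounter_eq_zero_of_mem hnT)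

theorem stmt10 {X : Type*} [NormedAddCommGroup X] [NormedSpace ℂ X] [CompleteSpace X]
    [TopologicalSpace.SeparableSpace X] (T : X →L[ℂ] X) :
    (SyndeticallyTransitive T ↔
      ∀ (Y : Type v) [NormedAddCommGroup Y] [NormedSpace ℂ Y] [CompleteSpace Y]
        [TopologicalSpace.SeparableSpace Y] (S : Y →L[ℂ] Y),
        WeaklyMixing S → WeaklyMixing (T.prodMap S)) ∧
    (SyndeticallyTransitive T ↔
      ∀ (Y : Type v) [NormedAddCommGroup Y] [NormedSpace ℂ Y] [CompleteSpace Y]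
        [TopologicalSpace.SeparableSpace Y] (S : Y →L[ℂ] Y),
        WeaklyMixing S → Hypercyclic (T.prodMap S)) := by
  have h₁₂ : SyndeticallyTransitive T → ∀ (Y : Type v) [NormedAddCommGroup Y] [NormedSpace ℂ Y]
      [CompleteSpace Y] [SeparableSpace Y] (S : Y →L[ℂ] Y),
      WeaklyMixing S → WeaklyMixing (T.prodMap S) :=
    fun hT _ _ _ _ _ _ hS => hT.weaklyMixing_prodMap hS
  have h₃₁ := syndeticallyTransitive_of_forall_hypercyclic_prodMap.{v} T
  exact ⟨⟨h₁₂, fun h => h₃₁ fun Y _ _ _ _ S hS => (h Y S hS).hypercyclic⟩,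
    ⟨fun hT Y _ _ _ _ S hS => (h₁₂ hT Y S hS).hypercyclic, h₃₁⟩⟩
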